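/- arXiv:0707.0785 — 2 statements merged into one kernel-verified Lean document; each statement's English description precedes it below -/
import Mathlib

section
/- Let M be a divisibility monoid. Every quasi-central element a of M satisfies Δ_R(a) = a (in particular Δ_R(a) exists). -/
/-- `LDvd b a` : `b` left-divides `a`, i.e. `a = b * d` for some `d`. -/
def LDvd {M : Type*} [Monoid M] (b a : M) : Prop := ∃ d, a = b * d

/-- `c` is a right lcm of `a` and `b`. -/
def IsRightLcm {M : Type*} [Monoid M] (a b c : M) : Prop :=
  LDvd a c ∧ LDvd b c ∧ ∀ m, LDvd a m → LDvd b m → LDvd c m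

/-- `1` is the only invertible element. -/
def Conical (M : Type*) [Monoid M] : Prop := ∀ u : M, IsUnit u → u = 1

/-- Left and right cancellativity. -/
def Cancellative (M : Type*) [Monoid M] : Prop :=
  (∀ a b c : M, a * b = a * c → b = c) ∧ (∀ a b c : M, b * a = c * a → b = c)

/-- `IsRes a b r` : `r` is the residue `a \ b`, i.e. `a * r` is the right lcm `a ∨ b`. -/
def IsRes {M : Type*} [Monoid M] (a b r : M) : Prop := IsRightLcm a b (a * r)

/-- The set of irreducible elements of `M`. -/
def Irr (M : Type*) [Monoid M] : Set M :=
  {a | a ≠ 1 ∧ ∀ b c : M, a = b * c → b = 1 ∨ c = 1}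

/-- `a` is quasi-central: `aΣ = Σa` where `Σ` is the set of irreducible elements. -/
def QuasiCentral {M : Type*} [Monoid M] (a : M) : Prop :=
  (fun x => a * x) '' Irr M = (fun x => x * a) '' Irr M

/-- `g` is a left gcd of `a` and `b`. -/
def IsLeftGcd {M : Type*} [Monoid M] (a b g : M) : Prop :=
  LDvd g a ∧ LDvd g b ∧ ∀ d, LDvd d a → LDvd d b → LDvd d g

/-- `j` is the join of `x` and `y` inside the lattice `↓(a)` of left divisors of `a`. -/
def IsJoinIn {M : Type*} [Monoid M] (a x y j : M) : Prop :=
  LDvd j a ∧ LDvd x j ∧ LDvd y j ∧ ∀ m, LDvd m a → LDvd x m → LDvd y m → LDvd j m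

/-- A (left) divisibility monoid : cancellative, finitely generated by its irreducible
elements, any two elements admit a left gcd, and every `↓(a)` is a finite distributive
lattice under left divisibility (meets are left gcds, joins exist, distributivity holds). -/
structure IsDivisibilityMonoid (M : Type*) [Monoid M] : Prop where
  mul_left_cancel : ∀ a b c : M, a * b = a * c → b = c
  mul_right_cancel : ∀ a b c : M, b * a = c * a → b = c
  irr_finite : (Irr M).Finite
  irr_gen : ∀ a : M, a ∈ Submonoid.closure (Irr M)
  exists_gcd : ∀ a b : M, ∃ g, IsLeftGcd a b g
  divisors_finite : ∀ a : M, {b : M | LDvd b a}.Finite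
  exists_join : ∀ a x y : M, LDvd x a → LDvd y a → ∃ j, IsJoinIn a x y j
  distrib : ∀ a x y z : M, LDvd x a → LDvd y a → LDvd z a →
    ∀ jyz g gxy gxz j', IsJoinIn a y z jyz → IsLeftGcd x jyz g →
      IsLeftGcd x y gxy → IsLeftGcd x z gxz → IsJoinIn a gxy gxz j' → g = j'

/-- `d` is the (right) local delta of `a`: the right lcm of the set `{b \ a : b ∈ M}`,
all of whose elements are required to exist. -/
def IsLocalDelta {M : Type*} [Monoid M] (a d : M) : Prop :=
  (∀ b : M, ∃ r, IsRes b a r) ∧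
  (∀ b r : M, IsRes b a r → LDvd r d) ∧
  ∀ m : M, (∀ b r : M, IsRes b a r → LDvd r m) → LDvd d m

/-!
Quasi-centrality lets `a` be moved from the right of any product of irreducibles to its left,
so `b * a = a * b'` is a common right multiple of `b` and `a`. Their join in the finite lattice
of left divisors of `b * a` is then a global right lcm `b * (b \ a)`, and cancelling `b` in
`b * (b \ a) ∣ b * a` gives `b \ a ∣ a`. Conversely `a = 1 \ a` is itself one of the residues.
-/

theorem LDvd.trans {M : Type*} [Monoid M] {x y z : M} (hxy : LDvd x y) (hyz : LDvd y z) :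
    LDvd x z := by
  obtain ⟨d, rfl⟩ := hxy
  obtain ⟨e, rfl⟩ := hyz
  exact ⟨d * e, mul_assoc _ _ _⟩

theorem ldvd_mul_right {M : Type*} [Monoid M] (x y : M) : LDvd x (x * y) := ⟨y, rfl⟩

theorem isRes_one_left {M : Type*} [Monoid M] (a : M) : IsRes 1 a a := by
  unfold IsRes
  rw [one_mul]
  exact ⟨⟨a, (one_mul a).symm⟩, ⟨1, (mul_one a).symm⟩, fun _ _ ham => ham⟩

theorem exists_mul_eq_mul_of_mem_closure {M : Type*} [Monoid M] {S : Set M} {a b : M}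
    (hS : (fun x => x * a) '' S ⊆ (fun x => a * x) '' S) (hb : b ∈ Submonoid.closure S) :
    ∃ b', b * a = a * b' := by
  induction hb using Submonoid.closure_induction with
  | mem s hs =>
    obtain ⟨s', -, hs'⟩ := hS ⟨s, hs, rfl⟩
    exact ⟨s', hs'.symm⟩
  | one => exact ⟨1, by rw [one_mul, mul_one]⟩
  | mul x y _ _ hx hy =>
    obtain ⟨x', hx'⟩ := hx
    obtain ⟨y', hy'⟩ := hy
    exact ⟨x' * y', by rw [mul_assoc, hy', ← mul_assoc, hx', mul_assoc]⟩

namespace IsDivisibilityMonoid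

variable {M : Type*} [Monoid M]

theorem ldvd_mul_of_quasiCentral (hM : IsDivisibilityMonoid M) {a : M} (ha : QuasiCentral a)
    (b : M) : LDvd a (b * a) :=
  exists_mul_eq_mul_of_mem_closure ha.ge (hM.irr_gen b)

/-- A join in `↓(c)` is a global right lcm: any common right multiple `m` of `x` and `y`
gives the common multiple `gcd(c, m)` inside `↓(c)`. -/
theorem isRightLcm_of_isJoinIn (hM : IsDivisibilityMonoid M) {c x y j : M}
    (hj : IsJoinIn c x y j) : IsRightLcm x y j := by
  obtain ⟨hjc, hxj, hyj, hmin⟩ := hj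
  refine ⟨hxj, hyj, fun m hxm hym => ?_⟩
  obtain ⟨g, hgc, hgm, hmax⟩ := hM.exists_gcd c m
  exact (hmin g hgc (hmax x (hxj.trans hjc) hxm) (hmax y (hyj.trans hjc) hym)).trans hgm

theorem exists_isRes_of_ldvd (hM : IsDivisibilityMonoid M) {a b c : M} (hb : LDvd b c)
    (ha : LDvd a c) : ∃ r, IsRes b a r := by
  obtain ⟨j, hj⟩ := hM.exists_join c b a hb ha
  obtain ⟨r, rfl⟩ := hj.2.1
  exact ⟨r, hM.isRightLcm_of_isJoinIn hj⟩

theorem ldvd_of_isRes (hM : IsDivisibilityMonoid M) {a b r m : M} (hr : IsRes b a r)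
    (ha : LDvd a (b * m)) : LDvd r m := by
  obtain ⟨u, hu⟩ := hr.2.2 (b * m) (ldvd_mul_right b m) ha
  rw [mul_assoc] at hu
  exact ⟨u, hM.mul_left_cancel b m (r * u) hu⟩

end IsDivisibilityMonoid

theorem stmt13 {M : Type*} [Monoid M] (hM : IsDivisibilityMonoid M)
    (a : M) (ha : QuasiCentral a) : IsLocalDelta a a :=
  ⟨fun b => hM.exists_isRes_of_ldvd (ldvd_mul_right b a) (hM.ldvd_mul_of_quasiCentral ha b),
    fun b _ hr => hM.ldvd_of_isRes hr (hM.ldvd_mul_of_quasiCentral ha b),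
    fun _ hm => hm 1 a (isRes_one_left a)⟩
end

section
/- Let M be a divisibility monoid and a an element of M such that Δ_R(a) exists. Then Δ_R(Δ_R(a)) exists and equals Δ_R(a); consequently Δ_R(a) is quasi-central. -/
/-!
Write `d = Δ_R(a)`. The elements `x ∣ d` all of whose residues `b \ x` exist and divide `d`
include every residue `c \ a` (as `b \ (c \ a) = (c * b) \ a`) and are closed under right lcms
(as `b \ (x ∨ y) = (b \ x) ∨ (b \ y)`); since `↓d` is finite, `d` itself is one of them. This is
`Δ_R(d) = d`, and it gives `x * d = d * u` for every `x`. Heights in the finite lattices `↓x`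
are additive, `h(x * y) = h(x) + h(y)` (project a maximal chain of `↓(x * y)` onto
`↓x × ↓y` by `p ↦ (p ∧ x, x \ (p ∨ x))`, which is strictly monotone by distributivity), so
`x ↦ u` maps the finite set `Σ` injectively into itself; hence `Σ d = d Σ`.
-/

section
variable {M : Type*} [Monoid M]

theorem isRes_one_left_s15 (x : M) : IsRes 1 x x := by
  refine ⟨?_, ?_, fun m _ hm => ?_⟩ <;> rw [one_mul]
  exacts [one_dvd x, dvd_refl x, hm]

theorem isRes_one_right (b : M) : IsRes b 1 1 := by
  refine ⟨?_, ?_, fun m hm _ => ?_⟩ <;> rw [mul_one]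
  exacts [dvd_refl b, one_dvd b, hm]

def ResiduesLDvd (d x : M) : Prop := ∀ b : M, ∃ r, IsRes b x r ∧ LDvd r d

theorem residuesLDvd_one (d : M) : ResiduesLDvd d 1 :=
  fun b => ⟨1, isRes_one_right b, one_dvd d⟩

theorem exists_mul_eq_mul_of_residuesLDvd {d : M} (hd : ResiduesLDvd d d) (x : M) :
    ∃ u, x * d = d * u := by
  obtain ⟨r, hr, t, rfl⟩ := hd x
  obtain ⟨q, hq⟩ := hr.2.1
  exact ⟨q * t, by rw [← mul_assoc, hq, mul_assoc]⟩

def IsStrictLDvdChain (f : ℕ → M) (n : ℕ) : Prop :=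
  ∀ i < n, LDvd (f i) (f (i + 1)) ∧ f i ≠ f (i + 1)

def HasChainOfLength (x : M) (n : ℕ) : Prop :=
  ∃ f : ℕ → M, f 0 = 1 ∧ f n = x ∧ IsStrictLDvdChain f n

/-- Junk value `0` when chains below `x` are unbounded; they are bounded in a divisibility
monoid (`IsDivisibilityMonoid.bddAbove_hasChainOfLength`). -/
noncomputable def ldvdHeight (x : M) : ℕ := sSup {n | HasChainOfLength x n}

theorem IsStrictLDvdChain.ldvd {f : ℕ → M} {n : ℕ} (hf : IsStrictLDvdChain f n) {i j : ℕ}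
    (hij : i ≤ j) (hjn : j ≤ n) : LDvd (f i) (f j) := by
  induction j, hij using Nat.le_induction with
  | base => exact dvd_refl _
  | succ j _ ih => exact dvd_trans (ih (by omega)) (hf j (by omega)).1

theorem HasChainOfLength.append {x : M} {m k : ℕ} (hx : HasChainOfLength x m) {g : ℕ → M}
    (hg : IsStrictLDvdChain g k) (hg0 : g 0 = x) : HasChainOfLength (g k) (m + k) := by
  obtain ⟨f, hf0, hfm, hf⟩ := hx
  refine ⟨fun i => if i ≤ m then f i else g (i - m), by simpa using hf0, ?_, fun i hi => ?_⟩
  · rcases k.eq_zero_or_pos with rfl | hk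
    · simp [hfm, hg0]
    · simp [show ¬ m + k ≤ m by omega]
  rcases lt_trichotomy i m with hlt | rfl | hmi
  · simpa [hlt.le, Nat.succ_le_of_lt hlt] using hf i hlt
  · simpa [hfm, ← hg0] using hg 0 (by omega)
  · simpa [show ¬ i ≤ m by omega, show ¬ i < m by omega, show i + 1 - m = i - m + 1 by omega]
      using hg (i - m) (by omega)

theorem HasChainOfLength.snoc {x y : M} {n : ℕ} (hx : HasChainOfLength x n) (hxy : LDvd x y)
    (hne : x ≠ y) : HasChainOfLength y (n + 1) :=
  hx.append (g := fun i => if i = 0 then x else y)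
    (fun i hi => by simp [show i = 0 by omega, hxy, hne]) rfl

theorem hasChainOfLength_one_zero : HasChainOfLength (1 : M) 0 :=
  ⟨fun _ => 1, rfl, rfl, fun _ h => absurd h (Nat.not_lt_zero _)⟩

theorem exists_hasChainOfLength (x : M) : ∃ n, HasChainOfLength x n := by
  by_cases hx : x = 1
  · exact ⟨0, hx ▸ hasChainOfLength_one_zero⟩
  · exact ⟨1, hasChainOfLength_one_zero.snoc (one_dvd x) (Ne.symm hx)⟩

namespace IsDivisibilityMonoid

/-- `u` is a join of `1` and `1` in `↓1`, and its own gcd with that join; the distributivity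
axiom asserts equality on the nose, not up to units, so it forces `u = 1`. -/
theorem eq_one_of_mul_eq_one (hM : IsDivisibilityMonoid M) {u v : M} (huv : u * v = 1) :
    u = 1 := by
  have hu1 : LDvd u 1 := ⟨v, huv.symm⟩
  have hu : ∀ m : M, LDvd u m := fun m => ⟨v * m, by rw [← mul_assoc, huv, one_mul]⟩
  exact hM.distrib 1 1 1 1 (one_dvd 1) (one_dvd 1) (one_dvd 1) u u 1 1 1
    ⟨hu1, one_dvd u, one_dvd u, fun m _ _ _ => hu m⟩
    ⟨hu1, dvd_refl u, fun _ _ h => h⟩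
    ⟨one_dvd 1, one_dvd 1, fun _ _ h => h⟩
    ⟨one_dvd 1, one_dvd 1, fun _ _ h => h⟩
    ⟨one_dvd 1, one_dvd 1, one_dvd 1, fun _ _ h _ => h⟩

theorem ldvd_antisymm (hM : IsDivisibilityMonoid M) {a b : M} (hab : LDvd a b) (hba : LDvd b a) :
    a = b := by
  obtain ⟨x, rfl⟩ := hab
  obtain ⟨y, hy⟩ := hba
  have hxy : x * y = 1 := hM.mul_left_cancel a (x * y) 1 (by rw [mul_one, ← mul_assoc, ← hy])
  rw [hM.eq_one_of_mul_eq_one hxy, mul_one]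

theorem ldvd_of_mul_ldvd_mul (hM : IsDivisibilityMonoid M) {a b c : M}
    (h : LDvd (a * b) (a * c)) : LDvd b c := by
  obtain ⟨t, ht⟩ := h
  exact ⟨t, hM.mul_left_cancel a c (b * t) (by rw [ht, mul_assoc])⟩

theorem isRes_unique (hM : IsDivisibilityMonoid M) {a b r r' : M} (h : IsRes a b r)
    (h' : IsRes a b r') : r = r' :=
  hM.mul_left_cancel a r r' (hM.ldvd_antisymm (h.2.2 _ h'.1 h'.2.1) (h'.2.2 _ h.1 h.2.1))

theorem exists_isRightLcm (hM : IsDivisibilityMonoid M) {x y m : M} (hx : LDvd x m)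
    (hy : LDvd y m) : ∃ l, IsRightLcm x y l := by
  obtain ⟨j, hjm, hxj, hyj, hj⟩ := hM.exists_join m x y hx hy
  refine ⟨j, hxj, hyj, fun k hxk hyk => ?_⟩
  obtain ⟨g, hgm, hgk, hg⟩ := hM.exists_gcd m k
  exact dvd_trans (hj g hgm (hg x hx hxk) (hg y hy hyk)) hgk

theorem exists_isJoinIn_mul (hM : IsDivisibilityMonoid M) {x y p : M} (hp : LDvd p (x * y)) :
    ∃ u, IsJoinIn (x * y) p x (x * u) := by
  obtain ⟨j, hj⟩ := hM.exists_join (x * y) p x hp (dvd_mul_right x y)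
  obtain ⟨u, rfl⟩ := hj.2.2.1
  exact ⟨u, hj⟩

theorem isRes_of_isRes_mul (hM : IsDivisibilityMonoid M) {a b c r r' : M} (hr : IsRes c a r)
    (hr' : IsRes (c * b) a r') : IsRes b r r' := by
  refine ⟨dvd_mul_right b r', ?_, fun m hbm hrm => ?_⟩
  · have h : LDvd (c * r) (c * b * r') :=
      hr.2.2 _ (dvd_trans (dvd_mul_right c b) (dvd_mul_right _ r')) hr'.2.1
    rw [mul_assoc] at h
    exact hM.ldvd_of_mul_ldvd_mul h
  · have h : LDvd (c * b * r') (c * m) :=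
      hr'.2.2 _ (mul_dvd_mul_left c hbm) (dvd_trans hr.2.1 (mul_dvd_mul_left c hrm))
    rw [mul_assoc] at h
    exact hM.ldvd_of_mul_ldvd_mul h

theorem isRes_of_isRightLcm (hM : IsDivisibilityMonoid M) {b x y j rx ry e : M}
    (hx : IsRes b x rx) (hy : IsRes b y ry) (he : IsRightLcm rx ry e) (hj : IsRightLcm x y j) :
    IsRes b j e := by
  refine ⟨dvd_mul_right b e, hj.2.2 _ ?_ ?_, fun m hbm hjm => ?_⟩
  · exact dvd_trans hx.2.1 (mul_dvd_mul_left b he.1)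
  · exact dvd_trans hy.2.1 (mul_dvd_mul_left b he.2.1)
  · obtain ⟨t, rfl⟩ := hbm
    have hrx : LDvd rx t := hM.ldvd_of_mul_ldvd_mul (hx.2.2 _ (dvd_mul_right b t)
      (dvd_trans hj.1 hjm))
    have hry : LDvd ry t := hM.ldvd_of_mul_ldvd_mul (hy.2.2 _ (dvd_mul_right b t)
      (dvd_trans hj.2.1 hjm))
    exact mul_dvd_mul_left b (he.2.2 t hrx hry)

theorem residuesLDvd_of_isRes (hM : IsDivisibilityMonoid M) {a d c r : M}
    (hd : IsLocalDelta a d) (hr : IsRes c a r) : ResiduesLDvd d r := fun b =>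
  have ⟨r', hr'⟩ := hd.1 (c * b)
  ⟨r', hM.isRes_of_isRes_mul hr hr', hd.2.1 _ _ hr'⟩

theorem residuesLDvd_of_isRightLcm (hM : IsDivisibilityMonoid M) {d x y j : M}
    (hx : ResiduesLDvd d x) (hy : ResiduesLDvd d y) (hj : IsRightLcm x y j) :
    ResiduesLDvd d j := by
  intro b
  obtain ⟨rx, hrx, hrxd⟩ := hx b
  obtain ⟨ry, hry, hryd⟩ := hy b
  obtain ⟨e, he⟩ := hM.exists_isRightLcm hrxd hryd
  exact ⟨e, hM.isRes_of_isRightLcm hrx hry he hj, he.2.2 d hrxd hryd⟩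

theorem exists_residuesLDvd_upperBound (hM : IsDivisibilityMonoid M) {d : M} {s : Set M}
    (hs : s.Finite) (hsd : ∀ r ∈ s, LDvd r d ∧ ResiduesLDvd d r) :
    ∃ j, LDvd j d ∧ ResiduesLDvd d j ∧ ∀ r ∈ s, LDvd r j := by
  induction s, hs using Set.Finite.induction_on with
  | empty => exact ⟨1, one_dvd d, residuesLDvd_one d, by simp⟩
  | @insert r s _ _ ih =>
    obtain ⟨hrd, hr⟩ := hsd r (Set.mem_insert r s)
    obtain ⟨j, hjd, hj, hsj⟩ := ih fun x hx => hsd x (Set.mem_insert_of_mem r hx)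
    obtain ⟨l, hl⟩ := hM.exists_isRightLcm hrd hjd
    refine ⟨l, hl.2.2 d hrd hjd, hM.residuesLDvd_of_isRightLcm hr hj hl, ?_⟩
    rintro x (rfl | hx)
    exacts [hl.1, dvd_trans (hsj x hx) hl.2.1]

theorem residuesLDvd_self_of_isLocalDelta (hM : IsDivisibilityMonoid M) {a d : M}
    (hd : IsLocalDelta a d) : ResiduesLDvd d d := by
  have hres : ∀ r ∈ {r | ∃ c, IsRes c a r}, LDvd r d := fun r ⟨c, hc⟩ => hd.2.1 c r hc
  obtain ⟨j, hjd, hj, hrj⟩ := hM.exists_residuesLDvd_upperBound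
    ((hM.divisors_finite d).subset hres)
    fun r hr => ⟨hres r hr, have ⟨_, hc⟩ := hr; hM.residuesLDvd_of_isRes hd hc⟩
  rwa [hM.ldvd_antisymm hjd (hd.2.2 j fun c r hc => hrj r ⟨c, hc⟩)] at hj

theorem isLocalDelta_self_of_residuesLDvd (hM : IsDivisibilityMonoid M) {d : M}
    (hd : ResiduesLDvd d d) : IsLocalDelta d d := by
  refine ⟨fun b => (hd b).imp fun _ h => h.1, fun b r hr => ?_,
    fun m hm => hm 1 d (isRes_one_left_s15 d)⟩
  obtain ⟨r', hr', hr'd⟩ := hd b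
  rwa [hM.isRes_unique hr hr']

theorem _root_.IsStrictLDvdChain.mul_left (hM : IsDivisibilityMonoid M) {g : ℕ → M} {k : ℕ}
    (hg : IsStrictLDvdChain g k) (x : M) : IsStrictLDvdChain (fun i => x * g i) k := fun i hi =>
  ⟨mul_dvd_mul_left x (hg i hi).1, fun h => (hg i hi).2 (hM.mul_left_cancel x _ _ h)⟩

theorem _root_.IsStrictLDvdChain.injOn (hM : IsDivisibilityMonoid M) {f : ℕ → M} {n : ℕ}
    (hf : IsStrictLDvdChain f n) : Set.InjOn f (Set.Iic n) := by
  have hne : ∀ i j, i < j → j ≤ n → f i ≠ f j := fun i j hij hjn heq =>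
    (hf i (by omega)).2 (hM.ldvd_antisymm (hf i (by omega)).1 (heq ▸ hf.ldvd hij hjn))
  intro i hi j hj hij
  rcases lt_trichotomy i j with h | h | h
  exacts [absurd hij (hne i j h hj), h, absurd hij.symm (hne j i h hi)]

theorem bddAbove_hasChainOfLength (hM : IsDivisibilityMonoid M) (x : M) :
    BddAbove {n | HasChainOfLength x n} := by
  refine ⟨(hM.divisors_finite x).toFinset.card, fun n ⟨f, _, hfn, hf⟩ => ?_⟩
  have hmaps : ∀ i ∈ Finset.range (n + 1), f i ∈ (hM.divisors_finite x).toFinset := fun i hi =>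
    (Set.Finite.mem_toFinset _).2 (hfn ▸ hf.ldvd (Nat.lt_succ_iff.1 (Finset.mem_range.1 hi)) le_rfl)
  have hinj : Set.InjOn f (Finset.range (n + 1)) := fun i hi j hj =>
    hf.injOn hM (by simpa [Nat.lt_succ_iff] using hi) (by simpa [Nat.lt_succ_iff] using hj)
  have := Finset.card_le_card_of_injOn f hmaps hinj
  simp only [Finset.card_range] at this
  omega

theorem le_ldvdHeight (hM : IsDivisibilityMonoid M) {x : M} {n : ℕ} (h : HasChainOfLength x n) :
    n ≤ ldvdHeight x :=
  le_csSup (hM.bddAbove_hasChainOfLength x) h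

theorem hasChainOfLength_ldvdHeight (hM : IsDivisibilityMonoid M) (x : M) :
    HasChainOfLength x (ldvdHeight x) :=
  Nat.sSup_mem (exists_hasChainOfLength x) (hM.bddAbove_hasChainOfLength x)

theorem ldvdHeight_lt_of_ldvd (hM : IsDivisibilityMonoid M) {x y : M} (hxy : LDvd x y)
    (hne : x ≠ y) : ldvdHeight x < ldvdHeight y :=
  hM.le_ldvdHeight ((hM.hasChainOfLength_ldvdHeight x).snoc hxy hne)

theorem ldvdHeight_le_of_ldvd (hM : IsDivisibilityMonoid M) {x y : M} (hxy : LDvd x y) :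
    ldvdHeight x ≤ ldvdHeight y := by
  rcases eq_or_ne x y with rfl | hne
  exacts [le_rfl, (hM.ldvdHeight_lt_of_ldvd hxy hne).le]

theorem add_ldvdHeight_le (hM : IsDivisibilityMonoid M) (x y : M) :
    ldvdHeight x + ldvdHeight y ≤ ldvdHeight (x * y) := by
  obtain ⟨g, hg0, hgk, hg⟩ := hM.hasChainOfLength_ldvdHeight y
  have h := (hM.hasChainOfLength_ldvdHeight x).append (hg.mul_left hM x) (by simp [hg0])
  exact hM.le_ldvdHeight (by simpa [hgk] using h)

/-- `q = q ∧ (p ∨ x) = (q ∧ p) ∨ (q ∧ x) = p ∨ (p ∧ x) = p`. -/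
theorem eq_of_ldvd_of_isLeftGcd_of_isJoinIn (hM : IsDivisibilityMonoid M) {m x p q g j : M}
    (hpm : LDvd p m) (hqm : LDvd q m) (hxm : LDvd x m) (hpq : LDvd p q) (hgp : IsLeftGcd p x g)
    (hgq : IsLeftGcd q x g) (hjp : IsJoinIn m p x j) (hjq : IsJoinIn m q x j) : q = p :=
  hM.distrib m q p x hqm hpm hxm j q p g p hjp ⟨dvd_refl q, hjq.2.1, fun _ h _ => h⟩
    ⟨hpq, dvd_refl p, fun _ _ h => h⟩ hgq ⟨hpm, dvd_refl p, hgp.1, fun _ _ h _ => h⟩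

theorem ldvdHeight_add_lt_of_ldvd (hM : IsDivisibilityMonoid M) {x y p q gp gq up uq : M}
    (hq : LDvd q (x * y)) (hpq : LDvd p q) (hne : p ≠ q) (hgp : IsLeftGcd p x gp)
    (hgq : IsLeftGcd q x gq) (hup : IsJoinIn (x * y) p x (x * up))
    (huq : IsJoinIn (x * y) q x (x * uq)) :
    ldvdHeight gp + ldvdHeight up < ldvdHeight gq + ldvdHeight uq := by
  have hg : LDvd gp gq := hgq.2.2 gp (dvd_trans hgp.1 hpq) hgp.2.1
  have hu : LDvd up uq :=
    hM.ldvd_of_mul_ldvd_mul (hup.2.2.2 _ huq.1 (dvd_trans hpq huq.2.1) huq.2.2.1)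
  rcases eq_or_ne gp gq with rfl | hgne
  · rcases eq_or_ne up uq with rfl | hune
    · exact absurd (hM.eq_of_ldvd_of_isLeftGcd_of_isJoinIn (dvd_trans hpq hq) hq
        (dvd_mul_right x y) hpq hgp hgq hup huq).symm hne
    · exact Nat.add_lt_add_left (hM.ldvdHeight_lt_of_ldvd hu hune) _
  · exact Nat.add_lt_add_of_lt_of_le (hM.ldvdHeight_lt_of_ldvd hg hgne)
      (hM.ldvdHeight_le_of_ldvd hu)

theorem _root_.IsStrictLDvdChain.le_ldvdHeight_add (hM : IsDivisibilityMonoid M) {f : ℕ → M} {n : ℕ}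
    (hf : IsStrictLDvdChain f n) {x y : M} (hfxy : ∀ i ≤ n, LDvd (f i) (x * y)) :
    ∀ i ≤ n, ∀ g u, IsLeftGcd (f i) x g → IsJoinIn (x * y) (f i) x (x * u) →
      i ≤ ldvdHeight g + ldvdHeight u := by
  intro i
  induction i with
  | zero => simp
  | succ i ih =>
    intro hi g' u' hg' hu'
    obtain ⟨g, hg⟩ := hM.exists_gcd (f i) x
    obtain ⟨u, hu⟩ := hM.exists_isJoinIn_mul (hfxy i (by omega))
    have := hM.ldvdHeight_add_lt_of_ldvd (hfxy (i + 1) hi) (hf i hi).1 (hf i hi).2 hg hg' hu hu'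
    have := ih (by omega) g u hg hu
    omega

theorem ldvdHeight_mul_le (hM : IsDivisibilityMonoid M) (x y : M) :
    ldvdHeight (x * y) ≤ ldvdHeight x + ldvdHeight y := by
  obtain ⟨f, -, hfn, hf⟩ := hM.hasChainOfLength_ldvdHeight (x * y)
  have hfxy : ∀ i ≤ ldvdHeight (x * y), LDvd (f i) (x * y) := fun i hi => hfn ▸ hf.ldvd hi le_rfl
  obtain ⟨g, hg⟩ := hM.exists_gcd (f _) x
  obtain ⟨u, hu⟩ := hM.exists_isJoinIn_mul (hfxy _ le_rfl)
  calc ldvdHeight (x * y) ≤ ldvdHeight g + ldvdHeight u :=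
        hf.le_ldvdHeight_add hM hfxy _ le_rfl g u hg hu
    _ ≤ ldvdHeight x + ldvdHeight y :=
        Nat.add_le_add (hM.ldvdHeight_le_of_ldvd hg.2.1)
          (hM.ldvdHeight_le_of_ldvd (hM.ldvd_of_mul_ldvd_mul hu.1))

theorem ldvdHeight_mul (hM : IsDivisibilityMonoid M) (x y : M) :
    ldvdHeight (x * y) = ldvdHeight x + ldvdHeight y :=
  le_antisymm (hM.ldvdHeight_mul_le x y) (hM.add_ldvdHeight_le x y)

theorem ldvdHeight_eq_zero_iff (hM : IsDivisibilityMonoid M) {x : M} :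
    ldvdHeight x = 0 ↔ x = 1 := by
  refine ⟨fun h => by_contra fun hx => ?_, ?_⟩
  · have := hM.ldvdHeight_lt_of_ldvd (one_dvd x) (Ne.symm hx)
    omega
  · rintro rfl
    have := hM.ldvdHeight_mul (1 : M) 1
    rw [mul_one] at this
    omega

theorem ldvdHeight_eq_one_iff (hM : IsDivisibilityMonoid M) {s : M} :
    ldvdHeight s = 1 ↔ s ∈ Irr M := by
  refine ⟨fun h => ⟨fun hs => ?_, fun b c hbc => ?_⟩, fun hs => ?_⟩
  · rw [hs, (hM.ldvdHeight_eq_zero_iff).2 rfl] at h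
    exact absurd h zero_ne_one
  · have := hM.ldvdHeight_mul b c
    rw [← hbc, h] at this
    simp only [← hM.ldvdHeight_eq_zero_iff]
    omega
  · obtain ⟨f, hf0, hfn, hf⟩ := hM.hasChainOfLength_ldvdHeight s
    have hpos : ldvdHeight s ≠ 0 := fun h => hs.1 ((hM.ldvdHeight_eq_zero_iff).1 h)
    by_contra hne
    obtain ⟨c, hc⟩ : LDvd (f 1) s := hfn ▸ hf.ldvd (by omega) le_rfl
    rcases hs.2 _ _ hc with h1 | rfl
    · exact (hf 0 (by omega)).2 (by rw [hf0, h1])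
    · have h1n : f 1 = f (ldvdHeight s) := by rw [hfn, hc, mul_one]
      exact hne (hf.injOn hM (Set.mem_Iic.2 (by omega)) (Set.mem_Iic.2 le_rfl) h1n).symm

theorem mem_irr_of_mul_eq_mul (hM : IsDivisibilityMonoid M) {s d u : M} (hs : s ∈ Irr M)
    (h : s * d = d * u) : u ∈ Irr M := by
  have := congrArg ldvdHeight h
  rw [hM.ldvdHeight_mul, hM.ldvdHeight_mul, (hM.ldvdHeight_eq_one_iff).2 hs] at this
  exact (hM.ldvdHeight_eq_one_iff).1 (by omega)

theorem quasiCentral_of_forall_exists_mul_eq (hM : IsDivisibilityMonoid M) {d : M}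
    (h : ∀ x, ∃ u, x * d = d * u) : QuasiCentral d := by
  choose ψ hψ using h
  have hmaps : Set.MapsTo ψ (Irr M) (Irr M) := fun s hs => hM.mem_irr_of_mul_eq_mul hs (hψ s)
  have hinj : Set.InjOn ψ (Irr M) := fun s _ t _ hst =>
    hM.mul_right_cancel d s t (by rw [hψ, hψ, hst])
  have hbij := (hM.irr_finite.injOn_iff_bijOn_of_mapsTo hmaps).1 hinj
  calc (fun x => d * x) '' Irr M = (fun x => d * x) '' (ψ '' Irr M) := by rw [hbij.image_eq]
    _ = (fun x => x * d) '' Irr M := by simp only [Set.image_image, hψ]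

end IsDivisibilityMonoid

end

theorem stmt15 {M : Type*} [Monoid M] (hM : IsDivisibilityMonoid M)
    (a d : M) (hd : IsLocalDelta a d) :
    IsLocalDelta d d ∧ QuasiCentral d := by
  have hdd := hM.residuesLDvd_self_of_isLocalDelta hd
  exact ⟨hM.isLocalDelta_self_of_residuesLDvd hdd,
    hM.quasiCentral_of_forall_exists_mul_eq (exists_mul_eq_mul_of_residuesLDvd hdd)⟩
end
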